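/- arXiv:2011.01343 — 2 statements merged into one kernel-verified Lean document; each statement's English description precedes it below -/
import Mathlib

section
/- Define R_t := min_{s ≤ t} M_s / S_s. For every stopping time τ that is almost surely finite and satisfies τ ≤ τ_F almost surely, and for every u ∈ (0,1): P( R_τ ≤ u ) ≤ u; that is, R_τ stochastically dominates a uniform (0,1) random variable. -/
/-!
If `R_τ ≤ u`, the ratio `M/S` first falls to at most `u` at some time `k ≤ τ`, and since
`τ ≤ τ_F`, `M` later climbs back to a running maximum, hence to at least `S_k`. On the event
`A_k` that the first such fall happens at `k`, the process `t ↦ 1_{A_k} M_{k+t} / S_k` is a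
nonnegative supermartingale starting below `u`, so by Ville's maximal inequality it reaches `1`
with probability at most `u · P(A_k)`. The events `A_k` are disjoint, so the bounds add up to `u`.
-/

open MeasureTheory Filter Set

/-- The running maximum `S t = max_{s ≤ t} M s`. -/
noncomputable def runMax {Ω : Type*} (M : ℕ → Ω → ℝ) (t : ℕ) (ω : Ω) : ℝ :=
  (Finset.range (t + 1)).sup' (Finset.nonempty_range_iff.mpr (Nat.succ_ne_zero t))
    (fun s => M s ω)

/-- The (ℕ ∪ {∞})-valued time of the final attained maximum of `M`. -/
noncomputable def tauF {Ω : Type*} (M : ℕ → Ω → ℝ) (ω : Ω) : ℕ∞ :=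
  ⨆ s ∈ {s : ℕ | M s ω = runMax M s ω}, (s : ℕ∞)

/-- `R t = min_{s ≤ t} M s / S s`. -/
noncomputable def Rproc {Ω : Type*} (M : ℕ → Ω → ℝ) (t : ℕ) (ω : Ω) : ℝ :=
  (Finset.range (t + 1)).inf' (Finset.nonempty_range_iff.mpr (Nat.succ_ne_zero t))
    (fun s => M s ω / runMax M s ω)

namespace MeasureTheory

variable {Ω : Type*} {m0 : MeasurableSpace Ω} {P : Measure Ω} {ℱ : Filtration ℕ m0}
  {M : ℕ → Ω → ℝ}

def Filtration.shift (ℱ : Filtration ℕ m0) (k : ℕ) : Filtration ℕ m0 :=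
  ⟨fun t => ℱ (k + t), fun _ _ h => ℱ.mono (Nat.add_le_add_left h k), fun _ => ℱ.le _⟩

theorem Supermartingale.maximal_ineq [IsFiniteMeasure P] (hM : Supermartingale M ℱ P)
    (hnonneg : 0 ≤ M) (ε : ℝ) (n : ℕ) :
    ε * P.real {ω | ∃ t ≤ n, ε ≤ M t ω} ≤ ∫ ω, M 0 ω ∂P := by
  set E := {ω | ∃ t ≤ n, ε ≤ M t ω}
  set π : Ω → ℕ∞ := fun ω => (hittingBtwn M (Ici ε) 0 n ω : ℕ)
  have hπ : IsStoppingTime ℱ π :=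
    hM.stronglyAdapted.adapted.isStoppingTime_hittingBtwn measurableSet_Ici
  have hπn (ω : Ω) : π ω ≤ n := Nat.cast_le.mpr (hittingBtwn_le ω)
  have hE : MeasurableSet E := (Measurable.exists fun t => measurable_const.and
    (measurableSet_le measurable_const
      ((hM.stronglyMeasurable t).measurable.mono (ℱ.le t) le_rfl)).mem).setOf
  have hlow : E.indicator (fun _ => ε) ≤ stoppedValue M π := by
    intro ω
    by_cases hω : ω ∈ E
    · rw [indicator_of_mem hω]
      obtain ⟨t, ht, hεt⟩ := hω
      exact stoppedValue_hittingBtwn_mem ⟨t, ⟨Nat.zero_le t, ht⟩, hεt⟩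
    · rw [indicator_of_notMem hω]
      exact hnonneg _ ω
  have hoptional : ∫ ω, -M 0 ω ∂P ≤ ∫ ω, -stoppedValue M π ω ∂P :=
    hM.neg.expected_stoppedValue_mono (isStoppingTime_const ℱ 0) hπ
      (fun _ => bot_le) hπn
  calc ε * P.real E = ∫ ω, E.indicator (fun _ => ε) ω ∂P := by
        rw [integral_indicator_const ε hE, smul_eq_mul, mul_comm]
    _ ≤ ∫ ω, stoppedValue M π ω ∂P :=
        integral_mono ((integrable_const ε).indicator hE)
          (integrable_stoppedValue ℕ hπ hM.integrable hπn) hlow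
    _ ≤ ∫ ω, M 0 ω ∂P := by
        rwa [integral_neg, integral_neg, neg_le_neg_iff] at hoptional

theorem Supermartingale.mul_shift (hM : Supermartingale M ℱ P) {k : ℕ} {ξ : Ω → ℝ}
    (hξ : StronglyMeasurable[ℱ k] ξ) (hξ0 : 0 ≤ ξ) {R : ℝ} (hξR : ∀ ω, ξ ω ≤ R) :
    Supermartingale (fun t => ξ * M (k + t)) (ℱ.shift k) P := by
  have hξt (t : ℕ) : StronglyMeasurable[ℱ (k + t)] ξ :=
    hξ.mono (ℱ.mono (Nat.le_add_right k t))
  have hint (t : ℕ) : Integrable (ξ * M (k + t)) P :=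
    (hM.integrable (k + t)).bdd_mul (hξ.mono (ℱ.le k)).aestronglyMeasurable
      (ae_of_all _ fun ω => by rw [Real.norm_of_nonneg (hξ0 ω)]; exact hξR ω)
  refine ⟨fun t => (hξt t).mul (hM.stronglyAdapted (k + t)), fun i j hij => ?_, hint⟩
  filter_upwards [condExp_mul_of_stronglyMeasurable_left (hξt i) (hint j)
    (hM.integrable (k + j)), hM.2.1 _ _ (Nat.add_le_add_left hij k)] with ω hmul hle
  change P[ξ * M (k + j) | ℱ (k + i)] ω ≤ ξ ω * M (k + i) ω
  rw [hmul]
  exact mul_le_mul_of_nonneg_left hle (hξ0 ω)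

theorem Supermartingale.measure_inter_exists_le_le [IsFiniteMeasure P]
    (hM : Supermartingale M ℱ P) (hnonneg : 0 ≤ M) {k : ℕ} {A : Set Ω}
    (hA : MeasurableSet[ℱ k] A) {c : Ω → ℝ} (hc : Measurable[ℱ k] c) (hc1 : ∀ ω, 1 ≤ c ω)
    {u : ℝ} (hu : 0 ≤ u) (hAu : ∀ ω ∈ A, M k ω ≤ u * c ω) :
    P (A ∩ {ω | ∃ t, k ≤ t ∧ c ω ≤ M t ω}) ≤ ENNReal.ofReal u * P A := by
  set ξ := A.indicator fun ω => (c ω)⁻¹ with hξ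
  have hξ0 : 0 ≤ ξ := indicator_nonneg fun ω _ => inv_nonneg.mpr (zero_le_one.trans (hc1 ω))
  have hξ1 (ω : Ω) : ξ ω ≤ 1 :=
    indicator_apply_le' (fun _ => inv_le_one_of_one_le₀ (hc1 ω)) fun _ => zero_le_one
  have hN := hM.mul_shift (hc.inv.indicator hA).stronglyMeasurable hξ0 hξ1
  set B : ℕ → Set Ω := fun n => {ω | ∃ t ≤ n, 1 ≤ ξ ω * M (k + t) ω}
  have hsub : A ∩ {ω | ∃ t, k ≤ t ∧ c ω ≤ M t ω} ⊆ ⋃ n, B n := by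
    rintro ω ⟨hωA, t, hkt, hct⟩
    refine mem_iUnion.mpr ⟨t - k, t - k, le_rfl, ?_⟩
    rw [hξ, indicator_of_mem hωA, Nat.add_sub_cancel' hkt, inv_mul_eq_div,
      one_le_div₀ (zero_lt_one.trans_le (hc1 ω))]
    exact hct
  have hB (n : ℕ) : P (B n) ≤ ENNReal.ofReal u * P A := by
    have hweighted : ∫ ω, ξ ω * M k ω ∂P ≤ ∫ ω, A.indicator (fun _ => u) ω ∂P := by
      refine integral_mono (hN.integrable 0) ((integrable_const u).indicator (ℱ.le k A hA)) ?_
      intro ω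
      change ξ ω * M k ω ≤ A.indicator (fun _ => u) ω
      by_cases hωA : ω ∈ A
      · rw [hξ, indicator_of_mem hωA, indicator_of_mem hωA,
          inv_mul_le_iff₀ (zero_lt_one.trans_le (hc1 ω)), mul_comm]
        exact hAu ω hωA
      · rw [hξ, indicator_of_notMem hωA, indicator_of_notMem hωA, zero_mul]
    have hville := hN.maximal_ineq (fun t ω => mul_nonneg (hξ0 ω) (hnonneg _ ω)) 1 n
    rw [one_mul] at hville
    rw [integral_indicator_const u (ℱ.le k A hA), smul_eq_mul, mul_comm] at hweighted
    rw [← ofReal_measureReal, ← ofReal_measureReal, ← ENNReal.ofReal_mul hu]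
    exact ENNReal.ofReal_le_ofReal (hville.trans hweighted)
  calc P (A ∩ {ω | ∃ t, k ≤ t ∧ c ω ≤ M t ω}) ≤ P (⋃ n, B n) := measure_mono hsub
    _ = ⨆ n, P (B n) :=
        Monotone.measure_iUnion fun m n hmn ω ⟨t, ht, h⟩ => ⟨t, ht.trans hmn, h⟩
    _ ≤ ENNReal.ofReal u * P A := iSup_le hB

end MeasureTheory

section RunningMaximum

open Function

variable {Ω : Type*} {M : ℕ → Ω → ℝ}

lemma le_runMax {s t : ℕ} (h : s ≤ t) (ω : Ω) : M s ω ≤ runMax M t ω :=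
  Finset.le_sup' (fun s => M s ω) (Finset.mem_range_succ_iff.mpr h)

lemma runMax_mono {s t : ℕ} (h : s ≤ t) (ω : Ω) : runMax M s ω ≤ runMax M t ω :=
  Finset.sup'_le _ _ fun _ hr => le_runMax ((Finset.mem_range_succ_iff.mp hr).trans h) ω

lemma runMax_zero (ω : Ω) : runMax M 0 ω = M 0 ω := by
  simp [runMax]

lemma measurable_runMax {mΩ : MeasurableSpace Ω} {t : ℕ} (hM : ∀ s ≤ t, Measurable (M s)) :
    Measurable (runMax M t) :=
  Finset.measurable_range_sup'' hM

def firstDrop (M : ℕ → Ω → ℝ) (u : ℝ) (k : ℕ) : Set Ω :=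
  {ω | M k ω ≤ u * runMax M k ω ∧ ∀ j < k, u * runMax M j ω < M j ω}

def recoveryAfterDrop (M : ℕ → Ω → ℝ) (u : ℝ) : Set Ω :=
  ⋃ k, firstDrop M u k ∩ {ω | ∃ t, k ≤ t ∧ runMax M k ω ≤ M t ω}

lemma measurableSet_firstDrop {mΩ : MeasurableSpace Ω} (u : ℝ) {k : ℕ}
    (hM : ∀ j ≤ k, Measurable (M j)) : MeasurableSet (firstDrop M u k) := by
  have hS (j : ℕ) (hj : j ≤ k) : Measurable (runMax M j) :=
    measurable_runMax fun s hs => hM s (hs.trans hj)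
  refine (Measurable.and (measurableSet_le (hM k le_rfl) ((hS k le_rfl).const_mul u)).mem
    (Measurable.forall fun j => Measurable.forall fun hj => ?_)).setOf
  exact (measurableSet_lt ((hS j hj.le).const_mul u) (hM j hj.le)).mem

lemma pairwise_disjoint_firstDrop (u : ℝ) : Pairwise (Disjoint on firstDrop M u) := by
  intro k l hkl
  refine Set.disjoint_left.mpr fun ω hk hl => ?_
  rcases hkl.lt_or_gt with h | h
  · exact (hl.2 k h).not_ge hk.1
  · exact (hk.2 l h).not_ge hl.1

lemma exists_mem_firstDrop_of_Rproc_le {u : ℝ} {n : ℕ} {ω : Ω} (h0 : 0 < M 0 ω)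
    (hR : Rproc M n ω ≤ u) : ∃ k ≤ n, ω ∈ firstDrop M u k := by
  classical
  obtain ⟨s, hs, hsu⟩ := (Finset.inf'_le_iff _).mp hR
  have hdrop : M s ω ≤ u * runMax M s ω :=
    (div_le_iff₀ (h0.trans_le (le_runMax (Nat.zero_le s) ω))).mp hsu
  have hex : ∃ k, M k ω ≤ u * runMax M k ω := ⟨s, hdrop⟩
  refine ⟨Nat.find hex, (Nat.find_min' hex hdrop).trans (Finset.mem_range_succ_iff.mp hs),
    Nat.find_spec hex, fun j hj => not_le.mp (Nat.find_min hex hj)⟩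

lemma exists_le_eq_runMax_of_le_tauF {n : ℕ} {ω : Ω} (h : (n : ℕ∞) ≤ tauF M ω) :
    ∃ s, n ≤ s ∧ M s ω = runMax M s ω := by
  rcases n with _ | m
  · exact ⟨0, le_rfl, (runMax_zero ω).symm⟩
  · obtain ⟨s, hs, hms⟩ := lt_biSup_iff.mp ((Nat.cast_lt.mpr m.lt_succ_self).trans_le h)
    exact ⟨s, Nat.cast_lt.mp hms, hs⟩

lemma mem_recoveryAfterDrop_of_Rproc_le {u : ℝ} {n : ℕ} {ω : Ω} (h0 : 0 < M 0 ω)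
    (hR : Rproc M n ω ≤ u) (hF : (n : ℕ∞) ≤ tauF M ω) : ω ∈ recoveryAfterDrop M u := by
  obtain ⟨k, hkn, hk⟩ := exists_mem_firstDrop_of_Rproc_le h0 hR
  obtain ⟨s, hns, hs⟩ := exists_le_eq_runMax_of_le_tauF hF
  exact mem_iUnion.mpr ⟨k, hk, s, hkn.trans hns, hs ▸ runMax_mono (hkn.trans hns) ω⟩

theorem measure_recoveryAfterDrop_le {m0 : MeasurableSpace Ω} {P : Measure Ω}
    [IsProbabilityMeasure P] {ℱ : Filtration ℕ m0} (hM : Supermartingale M ℱ P)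
    (hnonneg : 0 ≤ M) (h0 : ∀ ω, 1 ≤ M 0 ω) {u : ℝ} (hu : 0 ≤ u) :
    P (recoveryAfterDrop M u) ≤ ENNReal.ofReal u := by
  have hmeas (k : ℕ) : ∀ j ≤ k, Measurable[ℱ k] (M j) :=
    fun j hj => (hM.stronglyAdapted.adapted j).mono (ℱ.mono hj) le_rfl
  calc P (recoveryAfterDrop M u)
      ≤ ∑' k, P (firstDrop M u k ∩ {ω | ∃ t, k ≤ t ∧ runMax M k ω ≤ M t ω}) :=
        measure_iUnion_le _
    _ ≤ ∑' k, ENNReal.ofReal u * P (firstDrop M u k) :=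
        ENNReal.tsum_le_tsum fun k => hM.measure_inter_exists_le_le hnonneg
          (measurableSet_firstDrop u (hmeas k)) (measurable_runMax (hmeas k))
          (fun ω => (h0 ω).trans (le_runMax (Nat.zero_le k) ω)) hu fun _ hω => hω.1
    _ = ENNReal.ofReal u * P (⋃ k, firstDrop M u k) := by
        rw [ENNReal.tsum_mul_left, measure_iUnion (pairwise_disjoint_firstDrop u)
          fun k => ℱ.le k _ (measurableSet_firstDrop u (hmeas k))]
    _ ≤ ENNReal.ofReal u := mul_le_of_le_one_right' prob_le_one

end RunningMaximum

theorem stmt5_general {Ω : Type*} {m0 : MeasurableSpace Ω} {P : Measure Ω} [IsProbabilityMeasure P]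
    (ℱ : Filtration ℕ m0) (M : ℕ → Ω → ℝ)
    (hsuper : Supermartingale M ℱ P) (hnonneg : ∀ t ω, 0 ≤ M t ω)
    (hone : ∀ ω, M 0 ω = 1)
    (τ : Ω → ℕ∞)
    (hleF : ∀ᵐ ω ∂P, τ ω ≤ tauF M ω) :
    ∀ u : ℝ, 0 < u → u < 1 →
      P {ω | Rproc M (τ ω).toNat ω ≤ u} ≤ ENNReal.ofReal u := by
  intro u hu _
  refine (measure_mono_ae ?_).trans
    (measure_recoveryAfterDrop_le hsuper hnonneg (fun ω => (hone ω).ge) hu.le)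
  filter_upwards [hleF] with ω hτ hR
  -- `(τ ω).toNat ≤ τ ω` holds also where `τ ω = ⊤` and `toNat` returns `0`.
  exact mem_recoveryAfterDrop_of_Rproc_le (by rw [hone]; exact one_pos) hR
    ((ENat.natCast_toNat_le_self _).trans hτ)

/-- For any a.s. finite stopping time `τ ≤ τ_F` a.s., `R_τ` stochastically dominates a
uniform (0,1) random variable. -/
theorem stmt5 {Ω : Type*} {m0 : MeasurableSpace Ω} {P : Measure Ω} [IsProbabilityMeasure P]
    (ℱ : Filtration ℕ m0) (M : ℕ → Ω → ℝ)
    (hsuper : Supermartingale M ℱ P) (hnonneg : ∀ t ω, 0 ≤ M t ω)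
    (hone : ∀ ω, M 0 ω = 1)
    (τ : Ω → ℕ∞)
    (hstop : ∀ t : ℕ, MeasurableSet[ℱ t] {ω | τ ω ≤ (t : ℕ∞)})
    (hfin : ∀ᵐ ω ∂P, τ ω ≠ ⊤)
    (hleF : ∀ᵐ ω ∂P, τ ω ≤ tauF M ω) :
    ∀ u : ℝ, 0 < u → u < 1 →
      P {ω | Rproc M (τ ω).toNat ω ≤ u} ≤ ENNReal.ofReal u :=
  stmt5_general ℱ M hsuper hnonneg hone τ hleF
end

section
/- Pathwise for every t ≥ 1: Y_t − Y_{t−1} = (M_t − M_{t−1})·𝒢′(S_{t−1}) − D(S_t, S_{t−1}), where D(a,b) := 𝒢(b) − 𝒢(a) + (a − b)·𝒢′(b) is the Bregman divergence of −𝒢; moreover D(S_t, S_{t−1}) ≥ 0. -/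
open MeasureTheory Filter Set

/-- The ultimate supremum `S_∞ = sup_t M_t`. -/
noncomputable def supAll {Ω : Type*} (M : ℕ → Ω → ℝ) (ω : Ω) : ℝ :=
  ⨆ t : ℕ, M t ω

/-- `𝒢 s = ∫_0^1 g(s/u) du`. -/
noncomputable def calG (g : ℝ → ℝ) (s : ℝ) : ℝ :=
  ∫ u in Set.Ioc (0 : ℝ) 1, g (s / u)

/-- `𝒢′ s = ∫_s^∞ (g(x) − g(s))/x² dx`. -/
noncomputable def calG' (g : ℝ → ℝ) (s : ℝ) : ℝ :=
  ∫ x in Set.Ioi s, (g x - g s) / x ^ 2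

/-- The Azéma–Yor process `Y t = 𝒢(S t) − (S t − M t)·𝒢′(S t)`. -/
noncomputable def ayProc {Ω : Type*} (g : ℝ → ℝ) (M : ℕ → Ω → ℝ) (t : ℕ) (ω : Ω) : ℝ :=
  calG g (runMax M t ω) - (runMax M t ω - M t ω) * calG' g (runMax M t ω)

/-- The Bregman divergence of `−𝒢`: `D(a,b) = 𝒢(b) − 𝒢(a) + (a − b)·𝒢′(b)`. -/
noncomputable def bregD (g : ℝ → ℝ) (a b : ℝ) : ℝ :=
  calG g b - calG g a + (a - b) * calG' g b

/-!
Writing `I s = ∫_s^∞ g(x)/x² dx`, the substitution `u = s/x` gives `𝒢 s = s · I s`, and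
`𝒢′ s = I s − g s / s`. Hence `D(a, b) = a ∫_b^a (g x − g b)/x² dx`, which is nonnegative for
`0 < b ≤ a` because `g` is nondecreasing. The difference formula is pure algebra once one
splits on whether `M` makes a new maximum at time `t + 1`: if not, `S` does not move; if so,
`S_{t+1} = M_{t+1}` and the correction term of `Y_{t+1}` vanishes.
-/

section InvSq

variable {b : ℝ}

lemma eqOn_rpow_neg_two_inv_sq (hb : 0 < b) :
    EqOn (fun x : ℝ => x ^ (-2 : ℝ)) (fun x => (x ^ 2)⁻¹) (Ioi b) := fun x hx => by
  simp only [Real.rpow_neg (hb.trans hx).le]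
  norm_cast

lemma integrableOn_Ioi_inv_sq (hb : 0 < b) : IntegrableOn (fun x : ℝ => (x ^ 2)⁻¹) (Ioi b) :=
  (integrableOn_Ioi_rpow_of_lt (by norm_num) hb).congr_fun
    (eqOn_rpow_neg_two_inv_sq hb) measurableSet_Ioi

lemma integral_Ioi_inv_sq (hb : 0 < b) : ∫ x in Ioi b, (x ^ 2)⁻¹ = b⁻¹ := by
  rw [← setIntegral_congr_fun measurableSet_Ioi (eqOn_rpow_neg_two_inv_sq hb),
    integral_Ioi_rpow_of_lt (by norm_num) hb]
  norm_num [Real.rpow_neg_one]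

end InvSq

lemma calG_eq_mul_integral_Ioi (g : ℝ → ℝ) {s : ℝ} (hs : 0 < s) :
    calG g s = s * ∫ x in Ioi s, g x / x ^ 2 := by
  have hpos : ∀ x ∈ Ioi s, 0 < x := fun x hx => hs.trans hx
  have himage : (fun x : ℝ => s / x) '' Ioi s = Ioo 0 1 := by
    ext u
    constructor
    · rintro ⟨x, hx, rfl⟩
      exact ⟨div_pos hs (hpos x hx), (div_lt_one (hpos x hx)).mpr hx⟩
    · rintro ⟨hu0, hu1⟩
      refine ⟨s / u, ?_, by field_simp⟩
      rw [mem_Ioi, lt_div_iff₀ hu0]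
      nlinarith
  have hderiv : ∀ x ∈ Ioi s,
      HasDerivWithinAt (fun x : ℝ => s / x) (-(s / x ^ 2)) (Ioi s) x := fun x hx => by
    simpa [div_eq_mul_inv] using
      ((hasDerivAt_inv (hpos x hx).ne').const_mul s).hasDerivWithinAt
  have hinj : InjOn (fun x : ℝ => s / x) (Ioi s) := fun x _ y _ hxy => by
    simpa only [div_div_cancel₀ hs.ne'] using congrArg (s / ·) hxy
  have hsubst := integral_image_eq_integral_abs_deriv_smul measurableSet_Ioi hderiv hinj
    (fun u => g (s / u))
  rw [himage, ← integral_Ioc_eq_integral_Ioo] at hsubst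
  rw [calG, hsubst, ← integral_const_mul]
  refine setIntegral_congr_fun measurableSet_Ioi fun x hx => ?_
  rw [abs_neg, abs_of_pos (div_pos hs (pow_pos (hpos x hx) 2)), div_div_cancel₀ hs.ne',
    smul_eq_mul]
  ring

section SubConstDivSq

variable {g : ℝ → ℝ} {s : ℝ}

lemma integrableOn_Ioi_sub_div_sq (hs : 0 < s)
    (hint : IntegrableOn (fun x => g x / x ^ 2) (Ioi s)) (c : ℝ) :
    IntegrableOn (fun x => (g x - c) / x ^ 2) (Ioi s) :=
  (hint.sub ((integrableOn_Ioi_inv_sq hs).const_mul c)).congr_fun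
    (fun x _ => by simp only [Pi.sub_apply, div_eq_mul_inv, sub_mul]) measurableSet_Ioi

lemma integral_Ioi_sub_div_sq (hs : 0 < s)
    (hint : IntegrableOn (fun x => g x / x ^ 2) (Ioi s)) (c : ℝ) :
    ∫ x in Ioi s, (g x - c) / x ^ 2 = (∫ x in Ioi s, g x / x ^ 2) - c / s := by
  simp only [sub_div, div_eq_mul_inv c]
  rw [integral_sub hint ((integrableOn_Ioi_inv_sq hs).const_mul c), integral_const_mul,
    integral_Ioi_inv_sq hs]

end SubConstDivSq

lemma bregD_eq_mul_intervalIntegral {g : ℝ → ℝ} {a b : ℝ} (hb : 0 < b) (hba : b ≤ a)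
    (hint : IntegrableOn (fun x => g x / x ^ 2) (Ioi b)) :
    bregD g a b = a * ∫ x in b..a, (g x - g b) / x ^ 2 := by
  have ha : 0 < a := hb.trans_le hba
  have hint_a : IntegrableOn (fun x => g x / x ^ 2) (Ioi a) :=
    hint.mono_set (Ioi_subset_Ioi hba)
  rw [← intervalIntegral.integral_Ioi_sub_Ioi (integrableOn_Ioi_sub_div_sq hb hint (g b)) hba,
    integral_Ioi_sub_div_sq hb hint, integral_Ioi_sub_div_sq ha hint_a, bregD, calG',
    integral_Ioi_sub_div_sq hb hint, calG_eq_mul_integral_Ioi g hb, calG_eq_mul_integral_Ioi g ha]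
  field_simp
  ring

lemma bregD_nonneg {g : ℝ → ℝ} (hmono : MonotoneOn g (Ioi 0)) {a b : ℝ} (hb : 0 < b)
    (hba : b ≤ a) (hint : IntegrableOn (fun x => g x / x ^ 2) (Ioi b)) :
    0 ≤ bregD g a b := by
  rw [bregD_eq_mul_intervalIntegral hb hba hint]
  refine mul_nonneg (hb.le.trans hba) (intervalIntegral.integral_nonneg hba fun x hx => ?_)
  have hgx : g b ≤ g x := hmono hb (hb.trans_le hx.1) hx.1
  exact div_nonneg (sub_nonneg.mpr hgx) (sq_nonneg x)

section RunMax

variable {Ω : Type*} (M : ℕ → Ω → ℝ) (t : ℕ) (ω : Ω)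

lemma runMax_succ : runMax M (t + 1) ω = max (runMax M t ω) (M (t + 1) ω) := by
  simp only [runMax]
  rw [Finset.sup'_congr _ Finset.range_add_one fun _ _ => rfl, Finset.sup'_insert, sup_comm]

lemma apply_zero_le_runMax : M 0 ω ≤ runMax M t ω :=
  Finset.le_sup' (fun s => M s ω) (Finset.mem_range.mpr t.succ_pos)

lemma ayProc_succ_sub (g : ℝ → ℝ) :
    ayProc g M (t + 1) ω - ayProc g M t ω
      = (M (t + 1) ω - M t ω) * calG' g (runMax M t ω)
        - bregD g (runMax M (t + 1) ω) (runMax M t ω) := by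
  rcases le_total (M (t + 1) ω) (runMax M t ω) with h | h
  · have hS : runMax M (t + 1) ω = runMax M t ω := by rw [runMax_succ, max_eq_left h]
    simp only [ayProc, bregD, hS]
    ring
  · have hS : runMax M (t + 1) ω = M (t + 1) ω := by rw [runMax_succ, max_eq_right h]
    simp only [ayProc, bregD, hS]
    ring

end RunMax

theorem stmt10_general {Ω : Type*} (M : ℕ → Ω → ℝ)
    (hone : ∀ ω, M 0 ω = 1)
    (g : ℝ → ℝ)
    (hmono : MonotoneOn g (Set.Ioi 0))
    (hint : ∀ a ∈ Set.Ioi (0 : ℝ), IntegrableOn (fun x => g x / x ^ 2) (Set.Ioi a)) :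
    ∀ t ω,
      ayProc g M (t + 1) ω - ayProc g M t ω
          = (M (t + 1) ω - M t ω) * calG' g (runMax M t ω)
            - bregD g (runMax M (t + 1) ω) (runMax M t ω)
      ∧ 0 ≤ bregD g (runMax M (t + 1) ω) (runMax M t ω) := by
  intro t ω
  have hS_pos : 0 < runMax M t ω :=
    one_pos.trans_le (hone ω ▸ apply_zero_le_runMax M t ω)
  have hS_mono : runMax M t ω ≤ runMax M (t + 1) ω :=
    (runMax_succ M t ω).symm ▸ le_max_left _ _
  exact ⟨ayProc_succ_sub M t ω g, bregD_nonneg hmono hS_pos hS_mono (hint _ hS_pos)⟩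

/-- Pathwise difference formula for the Azéma–Yor process. -/
theorem stmt10 {Ω : Type*} {m0 : MeasurableSpace Ω} {P : Measure Ω} [IsProbabilityMeasure P]
    (ℱ : Filtration ℕ m0) (M : ℕ → Ω → ℝ)
    (hsuper : Supermartingale M ℱ P) (hnonneg : ∀ t ω, 0 ≤ M t ω)
    (hone : ∀ ω, M 0 ω = 1)
    (g : ℝ → ℝ)
    (hg0 : ∀ x ∈ Set.Ioi (0 : ℝ), 0 ≤ g x)
    (hmono : MonotoneOn g (Set.Ioi 0))
    (hint : ∀ a ∈ Set.Ioi (0 : ℝ), IntegrableOn (fun x => g x / x ^ 2) (Set.Ioi a)) :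
    ∀ t ω,
      ayProc g M (t + 1) ω - ayProc g M t ω
          = (M (t + 1) ω - M t ω) * calG' g (runMax M t ω)
            - bregD g (runMax M (t + 1) ω) (runMax M t ω)
      ∧ 0 ≤ bregD g (runMax M (t + 1) ω) (runMax M t ω) :=
  stmt10_general M hone g hmono hint
end
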